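/- arXiv:1506.03591 — 3 statements merged into one kernel-verified Lean document; each statement's English description precedes it below -/
import Mathlib

section
/- Assume 2θ ≤ ψ₂ − ψ₁. Then for every α > 0 and every s ∈ ℝ one has |γ̃_α(s) − γ̃_α′(s)·(s − proj_K(s))| ≤ 3θ/α. -/
open MeasureTheory

/-- The metric projection of `ℝ` onto the interval `K = [ψ₁, ψ₂]`. -/
noncomputable def projK (ψ₁ ψ₂ s : ℝ) : ℝ := max ψ₁ (min s ψ₂)

/-- The Yosida approximation `γ_α(s) = (1/α)(s − proj_K(s))`. -/
noncomputable def yosida (ψ₁ ψ₂ α s : ℝ) : ℝ := (1 / α) * (s - projK ψ₁ ψ₂ s)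

/-- The rescaled mollifier `ζ_ε(s) = (1/ε)·ζ(s/ε)`. -/
noncomputable def scaledMollifier (ζ : ℝ → ℝ) (ε s : ℝ) : ℝ := (1 / ε) * ζ (s / ε)

/-- The mollified Yosida approximation `γ̃_α = γ_α * ζ_θ` (convolution over `ℝ`
with respect to Lebesgue measure). -/
noncomputable def mollifiedYosida (ψ₁ ψ₂ α θ : ℝ) (ζ : ℝ → ℝ) (s : ℝ) : ℝ :=
  ∫ t, yosida ψ₁ ψ₂ α (s - t) * scaledMollifier ζ θ t

/-
The kernel `ζ_θ` is a probability density on `[-θ, θ]`, and `γ_α = π/α` is `(1/α)`-Lipschitz and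
affine with slope `1/α` on each component of `ℝ \ K`. Averaging against `ζ_θ` therefore keeps
`γ̃_α` `(1/α)`-Lipschitz (so `|γ̃_α′| ≤ 1/α`), within `θ/α` of `γ_α`, and of slope exactly `1/α`
at distance more than `θ` from `K`. Now split
`γ̃_α − γ̃_α′ π = (γ̃_α − γ_α) + (1/α − γ̃_α′) π`: the first term is at most `θ/α`; the second
vanishes far from `K`, and near `K` it is at most `(2/α) θ` because there `|π| ≤ θ`.
-/

open Set Topology

structure IsAveragingKernel (φ : ℝ → ℝ) (θ : ℝ) : Prop where
  nonneg : ∀ t, 0 ≤ φ t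
  support_subset : Function.support φ ⊆ Icc (-θ) θ
  integrable : Integrable φ
  integral_eq_one : ∫ t, φ t = 1

namespace IsAveragingKernel

variable {φ : ℝ → ℝ} {θ : ℝ}

theorem integral_mul_congr (hk : IsAveragingKernel φ θ) {g g' : ℝ → ℝ}
    (h : ∀ t ∈ Icc (-θ) θ, g t = g' t) : ∫ t, g t * φ t = ∫ t, g' t * φ t := by
  refine integral_congr_ae (ae_of_all _ fun t => ?_)
  by_cases ht : φ t = 0
  · simp [ht]
  · simp only [h t (hk.support_subset ht)]

theorem integrable_mul (hk : IsAveragingKernel φ θ) {g : ℝ → ℝ}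
    (hg : ContinuousOn g (Icc (-θ) θ)) : Integrable fun t => g t * φ t :=
  (integrableOn_iff_integrable_of_support_subset
    ((Function.support_mul_subset_right _ _).trans hk.support_subset)).mp
    (hk.integrable.integrableOn.continuousOn_mul hg isCompact_Icc)

theorem integral_const_mul (hk : IsAveragingKernel φ θ) (c : ℝ) : ∫ t, c * φ t = c := by
  rw [MeasureTheory.integral_const_mul, hk.integral_eq_one, mul_one]

theorem abs_integral_mul_le (hk : IsAveragingKernel φ θ) {g : ℝ → ℝ} {c : ℝ}
    (h : ∀ t ∈ Icc (-θ) θ, |g t| ≤ c) : |∫ t, g t * φ t| ≤ c := by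
  have hbound : ∀ t, ‖g t * φ t‖ ≤ c * φ t := fun t => by
    by_cases ht : φ t = 0
    · simp [ht]
    · rw [Real.norm_eq_abs, abs_mul, abs_of_nonneg (hk.nonneg t)]
      exact mul_le_mul_of_nonneg_right (h t (hk.support_subset ht)) (hk.nonneg t)
  calc |∫ t, g t * φ t| ≤ ∫ t, c * φ t :=
        norm_integral_le_of_norm_le (hk.integrable.const_mul c) (ae_of_all _ hbound)
    _ = c := hk.integral_const_mul c

variable {f : ℝ → ℝ} {K : NNReal}

theorem lipschitzWith_integral_comp_sub_mul (hk : IsAveragingKernel φ θ)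
    (hf : LipschitzWith K f) : LipschitzWith K fun s => ∫ t, f (s - t) * φ t := by
  refine LipschitzWith.of_dist_le_mul fun a b => ?_
  have hint : ∀ u, Integrable fun t => f (u - t) * φ t := fun u =>
    hk.integrable_mul (hf.continuous.comp (continuous_sub_left u)).continuousOn
  rw [Real.dist_eq, Real.dist_eq, ← integral_sub (hint a) (hint b)]
  simp_rw [← sub_mul]
  refine hk.abs_integral_mul_le fun t _ => ?_
  simpa [← Real.dist_eq] using hf.dist_le_mul (a - t) (b - t)

theorem abs_integral_comp_sub_mul_sub_le (hk : IsAveragingKernel φ θ)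
    (hf : LipschitzWith K f) (s : ℝ) : |(∫ t, f (s - t) * φ t) - f s| ≤ K * θ := by
  have hint : Integrable fun t => f (s - t) * φ t :=
    hk.integrable_mul (hf.continuous.comp (continuous_sub_left s)).continuousOn
  rw [← hk.integral_const_mul (f s), ← integral_sub hint (hk.integrable.const_mul _)]
  simp_rw [← sub_mul]
  refine hk.abs_integral_mul_le fun t ht => ?_
  calc |f (s - t) - f s| ≤ K * |s - t - s| := by
        simpa [← Real.dist_eq] using hf.dist_le_mul (s - t) s
    _ ≤ K * θ := by
        gcongr
        rw [sub_sub_cancel_left, abs_neg]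
        exact abs_le.mpr ht

theorem integral_comp_sub_mul_of_affine (hk : IsAveragingKernel φ θ) {a b u : ℝ}
    (h : ∀ t ∈ Icc (-θ) θ, f (u - t) = a * (u - t - b)) :
    ∫ t, f (u - t) * φ t = a * (u - b) - a * ∫ t, t * φ t := by
  rw [hk.integral_mul_congr h]
  calc ∫ t, a * (u - t - b) * φ t = ∫ t, (a * (u - b) * φ t - a * (t * φ t)) := by
        congr 1; ext t; ring
    _ = a * (u - b) - a * ∫ t, t * φ t := by
        have hmoment : Integrable fun t => t * φ t := hk.integrable_mul continuousOn_id
        rw [integral_sub (hk.integrable.const_mul _) (hmoment.const_mul _),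
          hk.integral_const_mul, MeasureTheory.integral_const_mul]

theorem hasDerivAt_integral_comp_sub_mul_of_affine (hk : IsAveragingKernel φ θ)
    {a b s : ℝ} (h : ∀ᶠ u in 𝓝 s, ∀ t ∈ Icc (-θ) θ, f (u - t) = a * (u - t - b)) :
    HasDerivAt (fun u => ∫ t, f (u - t) * φ t) a s := by
  have haff : HasDerivAt (fun u => a * (u - b) - a * ∫ t, t * φ t) a s := by
    simpa using (((hasDerivAt_id s).sub_const b).const_mul a).sub_const (a * ∫ t, t * φ t)
  exact haff.congr_of_eventuallyEq (h.mono fun u hu => hk.integral_comp_sub_mul_of_affine hu)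

end IsAveragingKernel

theorem isAveragingKernel_scaledMollifier {ζ : ℝ → ℝ} {θ : ℝ} (hθ : 0 < θ)
    (hsupp : Function.support ζ ⊆ Icc (-1) 1) (hint : ∫ t, ζ t = 1) (h0 : ∀ t, 0 ≤ ζ t) :
    IsAveragingKernel (scaledMollifier ζ θ) θ := by
  have hint' : ∫ t, scaledMollifier ζ θ t = 1 := by
    simp only [scaledMollifier]
    rw [MeasureTheory.integral_const_mul, Measure.integral_comp_div, hint, abs_of_pos hθ,
      smul_eq_mul, mul_one, one_div_mul_cancel hθ.ne']
  refine ⟨fun t => mul_nonneg (by positivity) (h0 _), fun t ht => ?_,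
    Integrable.of_integral_ne_zero (by simp [hint']), hint'⟩
  have hmem := hsupp (right_ne_zero_of_mul ht)
  rw [mem_Icc, le_div_iff₀ hθ, div_le_iff₀ hθ] at hmem
  constructor <;> linarith

theorem lipschitzWith_sub_projK (ψ₁ ψ₂ : ℝ) : LipschitzWith 1 fun s => s - projK ψ₁ ψ₂ s := by
  refine LipschitzWith.of_dist_le_mul fun x y => ?_
  simp only [Real.dist_eq, NNReal.coe_one, one_mul, projK, max_def, min_def]
  have h1 := le_abs_self (x - y)
  have h2 := neg_abs_le (x - y)
  split_ifs <;> rw [abs_le] <;> constructor <;> linarith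

theorem lipschitzWith_yosida (ψ₁ ψ₂ α : ℝ) : LipschitzWith ‖1 / α‖₊ (yosida ψ₁ ψ₂ α) := by
  have h := (lipschitzWith_smul (1 / α)).comp (lipschitzWith_sub_projK ψ₁ ψ₂)
  rw [mul_one] at h
  exact h

theorem projK_of_le_left {ψ₁ ψ₂ s : ℝ} (h : s ≤ ψ₁) : projK ψ₁ ψ₂ s = ψ₁ :=
  max_eq_left ((min_le_left _ _).trans h)

theorem projK_of_right_le {ψ₁ ψ₂ s : ℝ} (hψ : ψ₁ ≤ ψ₂) (h : ψ₂ ≤ s) : projK ψ₁ ψ₂ s = ψ₂ := by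
  rw [projK, min_eq_right h, max_eq_right hψ]

theorem abs_sub_projK_le {ψ₁ ψ₂ θ s : ℝ} (hψ : ψ₁ ≤ ψ₂) (hθ : 0 ≤ θ) (h₁ : ψ₁ - θ ≤ s)
    (h₂ : s ≤ ψ₂ + θ) : |s - projK ψ₁ ψ₂ s| ≤ θ := by
  rw [abs_le, projK, max_def, min_def]
  split_ifs <;> constructor <;> linarith

theorem deriv_mollifiedYosida_of_lt_or_lt {ψ₁ ψ₂ α θ s : ℝ} {ζ : ℝ → ℝ} (hψ : ψ₁ ≤ ψ₂)
    (hk : IsAveragingKernel (scaledMollifier ζ θ) θ) (hs : s < ψ₁ - θ ∨ ψ₂ + θ < s) :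
    deriv (mollifiedYosida ψ₁ ψ₂ α θ ζ) s = 1 / α := by
  refine HasDerivAt.deriv ?_
  rcases hs with hs | hs
  · refine hk.hasDerivAt_integral_comp_sub_mul_of_affine (b := ψ₁) ?_
    filter_upwards [Iio_mem_nhds hs] with u hu t ht
    rw [yosida, projK_of_le_left (by linarith [ht.1, mem_Iio.mp hu])]
  · refine hk.hasDerivAt_integral_comp_sub_mul_of_affine (b := ψ₂) ?_
    filter_upwards [Ioi_mem_nhds hs] with u hu t ht
    rw [yosida, projK_of_right_le hψ (by linarith [ht.2, mem_Ioi.mp hu])]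

theorem mollifiedYosida_sub_deriv_mul_dist_bound_general
    (ψ₁ ψ₂ θ : ℝ) (hψ₁ : ψ₁ < 0) (hψ₂ : 0 < ψ₂) (hθ : 0 < θ)
    (ζ : ℝ → ℝ)
    (hζsupp : Function.support ζ ⊆ Set.Icc (-1) 1)
    (hζint : ∫ t, ζ t = 1) (hζ0 : ∀ t, 0 ≤ ζ t) :
    ∀ α, 0 < α → ∀ s,
      |mollifiedYosida ψ₁ ψ₂ α θ ζ s -
          deriv (mollifiedYosida ψ₁ ψ₂ α θ ζ) s * (s - projK ψ₁ ψ₂ s)| ≤ 3 * θ / α := by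
  intro α hα s
  set G := mollifiedYosida ψ₁ ψ₂ α θ ζ
  have hψ : ψ₁ ≤ ψ₂ := (hψ₁.trans hψ₂).le
  have hk := isAveragingKernel_scaledMollifier hθ hζsupp hζint hζ0
  have hLip : ((‖1 / α‖₊ : NNReal) : ℝ) = 1 / α := by simp [abs_of_pos hα]
  have hclose : |G s - yosida ψ₁ ψ₂ α s| ≤ 1 / α * θ := by
    rw [← hLip]
    exact hk.abs_integral_comp_sub_mul_sub_le (lipschitzWith_yosida ψ₁ ψ₂ α) s
  have hslope : |(1 / α - deriv G s) * (s - projK ψ₁ ψ₂ s)| ≤ 2 / α * θ := by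
    by_cases hs : s < ψ₁ - θ ∨ ψ₂ + θ < s
    · rw [deriv_mollifiedYosida_of_lt_or_lt hψ hk hs, sub_self, zero_mul, abs_zero]
      positivity
    push Not at hs
    have hG' : |deriv G s| ≤ 1 / α := by
      rw [← hLip, ← Real.norm_eq_abs]
      exact norm_deriv_le_of_lipschitz
        (hk.lipschitzWith_integral_comp_sub_mul (lipschitzWith_yosida ψ₁ ψ₂ α))
    calc |(1 / α - deriv G s) * (s - projK ψ₁ ψ₂ s)|
        ≤ (|1 / α| + |deriv G s|) * θ := by
          rw [abs_mul]
          exact mul_le_mul (abs_sub _ _) (abs_sub_projK_le hψ hθ.le hs.1 hs.2)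
            (abs_nonneg _) (by positivity)
      _ ≤ (1 / α + 1 / α) * θ := by rw [abs_of_pos (by positivity)]; gcongr
      _ = 2 / α * θ := by ring
  calc |G s - deriv G s * (s - projK ψ₁ ψ₂ s)|
      = |(G s - yosida ψ₁ ψ₂ α s) + (1 / α - deriv G s) * (s - projK ψ₁ ψ₂ s)| := by
        rw [yosida]; congr 1; ring
    _ ≤ 1 / α * θ + 2 / α * θ := (abs_add_le _ _).trans (add_le_add hclose hslope)
    _ = 3 * θ / α := by ring

/-- The key estimate of step 3 of the proof of the limiting ε-almost C-stationarity
result (Theorem 7.1): if `2θ ≤ ψ₂ − ψ₁`, then for every `α > 0` and every `s ∈ ℝ`,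
`|γ̃_α(s) − γ̃_α′(s)·(s − proj_K(s))| ≤ 3θ/α`. -/
theorem mollifiedYosida_sub_deriv_mul_dist_bound
    (ψ₁ ψ₂ θ : ℝ) (hψ₁ : ψ₁ < 0) (hψ₂ : 0 < ψ₂) (hθ : 0 < θ)
    (h2θ : 2 * θ ≤ ψ₂ - ψ₁)
    (ζ : ℝ → ℝ) (hζC : ContDiff ℝ 1 ζ)
    (hζsupp : Function.support ζ ⊆ Set.Icc (-1) 1)
    (hζint : ∫ t, ζ t = 1) (hζ0 : ∀ t, 0 ≤ ζ t) (hζ1 : ∀ t, ζ t ≤ 1) :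
    ∀ α, 0 < α → ∀ s,
      |mollifiedYosida ψ₁ ψ₂ α θ ζ s -
          deriv (mollifiedYosida ψ₁ ψ₂ α θ ζ) s * (s - projK ψ₁ ψ₂ s)| ≤ 3 * θ / α :=
  mollifiedYosida_sub_deriv_mul_dist_bound_general ψ₁ ψ₂ θ hψ₁ hψ₂ hθ ζ hζsupp hζint hζ0
end

section
/- Assume 2θ ≤ ψ₂ − ψ₁, and let Λ : ℝ → ℝ be Lipschitz continuous with constant L and satisfy Λ(ψ₁) = Λ(ψ₂) = 0. Then for every α > 0 and every s ∈ ℝ one has |γ̃_α′(s)·Λ(proj_K(s))| ≤ L·θ/α. -/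
open MeasureTheory

/-- The pointwise estimate underlying step 2 of the proof of Theorem 7.1: if
`2θ ≤ ψ₂ − ψ₁` and `Λ` is `L`-Lipschitz with `Λ(ψ₁) = Λ(ψ₂) = 0`, then for every
`α > 0` and every `s ∈ ℝ`, `|γ̃_α′(s)·Λ(proj_K(s))| ≤ L·θ/α`. -/
theorem mollifiedYosida_deriv_mul_lipschitz_bound
    (ψ₁ ψ₂ θ : ℝ) (hψ₁ : ψ₁ < 0) (hψ₂ : 0 < ψ₂) (hθ : 0 < θ)
    (h2θ : 2 * θ ≤ ψ₂ - ψ₁)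
    (ζ : ℝ → ℝ) (hζC : ContDiff ℝ 1 ζ)
    (hζsupp : Function.support ζ ⊆ Set.Icc (-1) 1)
    (hζint : ∫ t, ζ t = 1) (hζ0 : ∀ t, 0 ≤ ζ t) (hζ1 : ∀ t, ζ t ≤ 1)
    (Λ : ℝ → ℝ) (L : ℝ) (hΛlip : ∀ s t, |Λ s - Λ t| ≤ L * |s - t|)
    (hΛψ₁ : Λ ψ₁ = 0) (hΛψ₂ : Λ ψ₂ = 0) :
    ∀ α, 0 < α → ∀ s,
      |deriv (mollifiedYosida ψ₁ ψ₂ α θ ζ) s * Λ (projK ψ₁ ψ₂ s)| ≤ L * θ / α := by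
  intro α hα s
  have hL : 0 ≤ L := by
    have h := hΛlip 0 1
    have h0 := abs_nonneg (Λ 0 - Λ 1)
    simp only [show |(0:ℝ) - 1| = 1 by norm_num] at h
    linarith
  set γ := mollifiedYosida ψ₁ ψ₂ α θ ζ with hγ
  have hζcont : Continuous ζ := hζC.continuous
  have hmolcont : Continuous (scaledMollifier ζ θ) := by
    unfold scaledMollifier; fun_prop
  have hmolnn : ∀ t, 0 ≤ scaledMollifier ζ θ t := fun t =>
    mul_nonneg (by positivity) (hζ0 _)
  have hmolsupp : ∀ t : ℝ, θ < |t| → scaledMollifier ζ θ t = 0 := by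
    intro t ht
    have hz : ζ (t / θ) = 0 := by
      by_contra h
      have hm := hζsupp (Function.mem_support.2 h)
      rw [Set.mem_Icc] at hm
      have h1 : t ≤ θ := (div_le_one hθ).1 hm.2
      have h2 : -θ ≤ t := by
        have := (le_div_iff₀ hθ).1 hm.1
        linarith
      rcases abs_cases t with ⟨he, _⟩ | ⟨he, _⟩ <;> linarith
    simp [scaledMollifier, hz]
  have hmolcs : HasCompactSupport (scaledMollifier ζ θ) := by
    apply HasCompactSupport.intro (isCompact_Icc (a := -θ) (b := θ))
    intro t ht
    apply hmolsupp
    rw [Set.mem_Icc] at ht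
    push_neg at ht
    rcases abs_cases t with ⟨he, _⟩ | ⟨he, _⟩ <;>
      rcases le_or_gt (-θ) t with h' | h' <;> first | linarith | linarith [ht h']
  have hmolInteg : Integrable (scaledMollifier ζ θ) :=
    hmolcont.integrable_of_hasCompactSupport hmolcs
  have hmolint : ∫ t, scaledMollifier ζ θ t = 1 := by
    unfold scaledMollifier
    rw [integral_const_mul, Measure.integral_comp_div ζ θ, smul_eq_mul, hζint, abs_of_pos hθ]
    field_simp
  have hyoscont : Continuous (yosida ψ₁ ψ₂ α) := by
    unfold yosida projK; fun_prop
  have hint : ∀ x : ℝ,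
      Integrable (fun t => yosida ψ₁ ψ₂ α (x - t) * scaledMollifier ζ θ t) := by
    intro x
    apply Continuous.integrable_of_hasCompactSupport (by fun_prop)
    apply HasCompactSupport.mul_left hmolcs
  have hyoslip : ∀ a b : ℝ, |yosida ψ₁ ψ₂ α a - yosida ψ₁ ψ₂ α b| ≤ (1 / α) * |a - b| := by
    intro a b
    unfold yosida projK
    rw [← mul_sub, abs_mul, abs_of_pos (by positivity : (0:ℝ) < 1 / α)]
    refine mul_le_mul_of_nonneg_left ?_ (by positivity)
    rcases abs_cases (a - b) with ⟨h1, h2⟩ | ⟨h1, h2⟩ <;>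
      simp only [max_def, min_def] <;> split_ifs <;> rw [abs_le] <;> constructor <;> linarith
  have hlip : ∀ x : ℝ, |γ x - γ s| ≤ (1 / α) * |x - s| := by
    intro x
    rw [hγ]
    unfold mollifiedYosida
    rw [← integral_sub (hint x) (hint s)]
    have h1 : ∀ t, |yosida ψ₁ ψ₂ α (x - t) * scaledMollifier ζ θ t -
        yosida ψ₁ ψ₂ α (s - t) * scaledMollifier ζ θ t| ≤
        ((1 / α) * |x - s|) * scaledMollifier ζ θ t := by
      intro t
      rw [← sub_mul, abs_mul, abs_of_nonneg (hmolnn t)]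
      refine mul_le_mul_of_nonneg_right ?_ (hmolnn t)
      have h := hyoslip (x - t) (s - t)
      rwa [sub_sub_sub_cancel_right] at h
    calc |∫ t, (yosida ψ₁ ψ₂ α (x - t) * scaledMollifier ζ θ t -
            yosida ψ₁ ψ₂ α (s - t) * scaledMollifier ζ θ t)|
        ≤ ∫ t, |yosida ψ₁ ψ₂ α (x - t) * scaledMollifier ζ θ t -
            yosida ψ₁ ψ₂ α (s - t) * scaledMollifier ζ θ t| := by
          simpa [Real.norm_eq_abs] using norm_integral_le_integral_norm
            (fun t => yosida ψ₁ ψ₂ α (x - t) * scaledMollifier ζ θ t -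
              yosida ψ₁ ψ₂ α (s - t) * scaledMollifier ζ θ t)
      _ ≤ ∫ t, ((1 / α) * |x - s|) * scaledMollifier ζ θ t :=
          integral_mono ((hint x).sub (hint s)).abs (hmolInteg.const_mul _) h1
      _ = (1 / α) * |x - s| := by rw [integral_const_mul, hmolint, mul_one]
  have hderiv : |deriv γ s| ≤ 1 / α := by
    have h : ∀ᶠ x in nhds s, ‖γ x - γ s‖ ≤ (1 / α) * ‖x - s‖ :=
      Filter.Eventually.of_forall fun x => by
        rw [Real.norm_eq_abs, Real.norm_eq_abs]; exact hlip x
    have h2 := norm_deriv_le_of_lip' (𝕜 := ℝ) (f := γ) (x₀ := s) (by positivity) h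
    simpa [Real.norm_eq_abs] using h2
  have hbound : ∀ c : ℝ, |Λ (projK ψ₁ ψ₂ s)| ≤ L * θ →
      |deriv γ s * Λ (projK ψ₁ ψ₂ s)| ≤ L * θ / α := by
    intro _ hΛb
    rw [abs_mul]
    calc |deriv γ s| * |Λ (projK ψ₁ ψ₂ s)| ≤ (1 / α) * (L * θ) :=
        mul_le_mul hderiv hΛb (abs_nonneg _) (by positivity)
      _ = L * θ / α := by ring
  rcases le_or_gt s (ψ₁ + θ) with hcase | hcase
  · apply hbound 0
    have hp1 : ψ₁ ≤ projK ψ₁ ψ₂ s := le_max_left _ _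
    have hp2 : projK ψ₁ ψ₂ s ≤ ψ₁ + θ :=
      max_le (by linarith) (le_trans (min_le_left _ _) hcase)
    have h := hΛlip (projK ψ₁ ψ₂ s) ψ₁
    rw [hΛψ₁, sub_zero] at h
    refine h.trans (mul_le_mul_of_nonneg_left ?_ hL)
    rw [abs_le]; constructor <;> linarith
  rcases le_or_gt (ψ₂ - θ) s with hcase2 | hcase2
  · apply hbound 0
    have hp1 : projK ψ₁ ψ₂ s ≤ ψ₂ := max_le (by linarith) (min_le_right _ _)
    have hp2 : ψ₂ - θ ≤ projK ψ₁ ψ₂ s :=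
      le_trans (le_min hcase2 (by linarith)) (le_max_right _ _)
    have h := hΛlip (projK ψ₁ ψ₂ s) ψ₂
    rw [hΛψ₂, sub_zero] at h
    refine h.trans (mul_le_mul_of_nonneg_left ?_ hL)
    rw [abs_le]; constructor <;> linarith
  · have hzero : ∀ x ∈ Set.Ioo (ψ₁ + θ) (ψ₂ - θ), γ x = 0 := by
      intro x hx
      rw [hγ]
      unfold mollifiedYosida
      have : (fun t => yosida ψ₁ ψ₂ α (x - t) * scaledMollifier ζ θ t) = fun _ => (0:ℝ) := by
        funext t
        rcases le_or_gt |t| θ with h | h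
        · rw [abs_le] at h
          obtain ⟨hx1, hx2⟩ := hx
          have hm1 : ψ₁ ≤ x - t := by linarith [h.2]
          have hm2 : x - t ≤ ψ₂ := by linarith [h.1]
          have hy : yosida ψ₁ ψ₂ α (x - t) = 0 := by
            unfold yosida projK
            rw [min_eq_left hm2, max_eq_right hm1]
            ring
          rw [hy, zero_mul]
        · rw [hmolsupp t h, mul_zero]
      rw [this, integral_zero]
    have hd0 : deriv γ s = 0 := by
      have heq : γ =ᶠ[nhds s] fun _ => (0:ℝ) := by
        filter_upwards [Ioo_mem_nhds hcase hcase2] with x hx using hzero x hx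
      rw [heq.deriv_eq, deriv_const]
    rw [hd0, zero_mul, abs_zero]
    exact div_nonneg (mul_nonneg hL hθ.le) hα.le
end

section
/- Assume θ ≤ min(−ψ₁, ψ₂). Then for every α > 0: ψ₀ₐ(s) ≥ (ψ₁ − θ − s)²/(2α) for every s ≤ ψ₁ − θ, and ψ₀ₐ(s) ≥ (s − ψ₂ − θ)²/(2α) for every s ≥ ψ₂ + θ. -/
open MeasureTheory

/-- The regularized potential `ψ₀ₐ(s) = ∫₀ˢ γ̃_α(t) dt`. -/
noncomputable def regPotential (ψ₁ ψ₂ α θ : ℝ) (ζ : ℝ → ℝ) (s : ℝ) : ℝ :=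
  ∫ t in (0 : ℝ)..s, mollifiedYosida ψ₁ ψ₂ α θ ζ t

/-! `γ_α` is nondecreasing and vanishes on `K`, and `ζ_θ` is a probability density on `[-θ, θ]`,
so `γ_α(s - θ) ≤ γ̃_α(s) ≤ γ_α(s + θ)`; in particular `γ̃_α` is nondecreasing. Since
`θ ≤ min(-ψ₁, ψ₂)`, this makes `γ̃_α(0) = 0`, `γ̃_α(s) ≥ (s - ψ₂ - θ)/α` for `s ≥ ψ₂ + θ` and
`γ̃_α(s) ≤ (s - ψ₁ + θ)/α` for `s ≤ ψ₁ - θ`; integrating from `0` gives the quadratic bounds. -/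

open Set Function

section MonotoneIntegral

lemma intervalIntegral_sub_div (a s α : ℝ) :
    ∫ t in a..s, (t - a) / α = (s - a) ^ 2 / (2 * α) := by
  rw [intervalIntegral.integral_div, intervalIntegral.integral_comp_sub_right (fun t => t),
    integral_id]
  ring

variable {f : ℝ → ℝ} {a s α : ℝ}

lemma sq_div_le_intervalIntegral_of_monotone_of_nonneg (hf : Monotone f) (hf0 : 0 ≤ f 0)
    (ha : 0 ≤ a) (has : a ≤ s) (hlin : ∀ t ∈ Icc a s, (t - a) / α ≤ f t) :
    (s - a) ^ 2 / (2 * α) ≤ ∫ t in 0..s, f t := by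
  have hpos : 0 ≤ ∫ t in 0..a, f t :=
    intervalIntegral.integral_nonneg ha fun t ht => hf0.trans (hf ht.1)
  have hlinear : Continuous fun t => (t - a) / α := by fun_prop
  have hgrowth : ∫ t in a..s, (t - a) / α ≤ ∫ t in a..s, f t :=
    intervalIntegral.integral_mono_on has (hlinear.intervalIntegrable _ _)
      hf.intervalIntegrable hlin
  rw [← intervalIntegral.integral_add_adjacent_intervals hf.intervalIntegrable
    hf.intervalIntegrable, ← intervalIntegral_sub_div]
  exact le_add_of_nonneg_of_le hpos hgrowth

lemma sq_div_le_intervalIntegral_of_monotone_of_nonpos (hf : Monotone f) (hf0 : f 0 ≤ 0)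
    (ha : a ≤ 0) (hsa : s ≤ a) (hlin : ∀ t ∈ Icc s a, f t ≤ (t - a) / α) :
    (a - s) ^ 2 / (2 * α) ≤ ∫ t in 0..s, f t := by
  have key := sq_div_le_intervalIntegral_of_monotone_of_nonneg (f := fun t => -f (-t)) (α := α)
    (fun x y hxy => neg_le_neg (hf (neg_le_neg hxy))) (by simpa using hf0) (neg_nonneg.2 ha)
    (neg_le_neg hsa) fun t ht => by
      rw [le_neg, ← neg_div]
      exact (hlin (-t) ⟨le_neg_of_le_neg ht.2, neg_le.1 ht.1⟩).trans_eq (by ring)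
  rw [intervalIntegral.integral_neg, intervalIntegral.integral_comp_neg, neg_neg, neg_zero,
    intervalIntegral.integral_symm, neg_neg] at key
  convert key using 2
  ring

end MonotoneIntegral

section MonotoneConvolution

variable {g ρ : ℝ → ℝ} {θ : ℝ}

lemma integrable_comp_sub_mul (hg : Continuous g) (hρ : Continuous ρ) (hρs : HasCompactSupport ρ)
    (s : ℝ) : Integrable fun t => g (s - t) * ρ t :=
  ((hg.comp (continuous_const.sub continuous_id)).mul hρ).integrable_of_hasCompactSupport
    hρs.mul_left

lemma monotone_integral_comp_sub_mul (hg : Monotone g) (hgc : Continuous g) (hρ : Continuous ρ)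
    (hρs : HasCompactSupport ρ) (hρ0 : ∀ t, 0 ≤ ρ t) :
    Monotone fun s => ∫ t, g (s - t) * ρ t := fun s s' hss' =>
  integral_mono (integrable_comp_sub_mul hgc hρ hρs s) (integrable_comp_sub_mul hgc hρ hρs s')
    fun t => mul_le_mul_of_nonneg_right (hg (by linarith)) (hρ0 t)

lemma le_integral_comp_sub_mul (hg : Monotone g) (hgc : Continuous g) (hρ : Continuous ρ)
    (hρ0 : ∀ t, 0 ≤ ρ t) (hsupp : support ρ ⊆ Icc (-θ) θ) (hρ1 : ∫ t, ρ t = 1) (s : ℝ) :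
    g (s - θ) ≤ ∫ t, g (s - t) * ρ t := by
  have hρs := HasCompactSupport.of_support_subset_isCompact isCompact_Icc hsupp
  calc g (s - θ) = ∫ t, g (s - θ) * ρ t := by rw [integral_const_mul, hρ1, mul_one]
    _ ≤ ∫ t, g (s - t) * ρ t := by
      refine integral_mono ((hρ.integrable_of_hasCompactSupport hρs).const_mul _)
        (integrable_comp_sub_mul hgc hρ hρs s) fun t => ?_
      by_cases ht : ρ t = 0
      · simp [ht]
      · exact mul_le_mul_of_nonneg_right (hg (by linarith [(hsupp ht).2])) (hρ0 t)

lemma integral_comp_sub_mul_le (hg : Monotone g) (hgc : Continuous g) (hρ : Continuous ρ)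
    (hρ0 : ∀ t, 0 ≤ ρ t) (hsupp : support ρ ⊆ Icc (-θ) θ) (hρ1 : ∫ t, ρ t = 1) (s : ℝ) :
    ∫ t, g (s - t) * ρ t ≤ g (s + θ) := by
  have hρs := HasCompactSupport.of_support_subset_isCompact isCompact_Icc hsupp
  calc ∫ t, g (s - t) * ρ t ≤ ∫ t, g (s + θ) * ρ t := by
        refine integral_mono (integrable_comp_sub_mul hgc hρ hρs s)
          ((hρ.integrable_of_hasCompactSupport hρs).const_mul _) fun t => ?_
        by_cases ht : ρ t = 0
        · simp [ht]
        · exact mul_le_mul_of_nonneg_right (hg (by linarith [(hsupp ht).1])) (hρ0 t)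
    _ = g (s + θ) := by rw [integral_const_mul, hρ1, mul_one]

end MonotoneConvolution

section Yosida

variable {ψ₁ ψ₂ α x : ℝ}

lemma continuous_yosida (ψ₁ ψ₂ α : ℝ) : Continuous (yosida ψ₁ ψ₂ α) := by
  unfold yosida projK
  fun_prop

lemma monotone_yosida (ψ₁ ψ₂ : ℝ) (hα : 0 ≤ α) : Monotone (yosida ψ₁ ψ₂ α) := by
  intro x y hxy
  unfold yosida projK
  refine mul_le_mul_of_nonneg_left ?_ (by positivity)
  simp only [max_def, min_def]
  split_ifs <;> linarith

lemma yosida_eq_zero (hx : x ∈ Icc ψ₁ ψ₂) : yosida ψ₁ ψ₂ α x = 0 := by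
  rw [yosida, projK, min_eq_left hx.2, max_eq_right hx.1, sub_self, mul_zero]

lemma yosida_of_le (hψ : ψ₁ ≤ ψ₂) (hx : x ≤ ψ₁) : yosida ψ₁ ψ₂ α x = (x - ψ₁) / α := by
  rw [yosida, projK, min_eq_left (hx.trans hψ), max_eq_left hx, one_div_mul_eq_div]

lemma yosida_of_ge (hψ : ψ₁ ≤ ψ₂) (hx : ψ₂ ≤ x) : yosida ψ₁ ψ₂ α x = (x - ψ₂) / α := by
  rw [yosida, projK, min_eq_right hx, max_eq_right hψ, one_div_mul_eq_div]

end Yosida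

section Mollifier

variable {ζ : ℝ → ℝ} {ε : ℝ}

lemma continuous_scaledMollifier (hζ : Continuous ζ) (ε : ℝ) :
    Continuous (scaledMollifier ζ ε) := by
  unfold scaledMollifier
  fun_prop

lemma scaledMollifier_nonneg (hζ0 : ∀ t, 0 ≤ ζ t) (hε : 0 ≤ ε) (t : ℝ) :
    0 ≤ scaledMollifier ζ ε t :=
  mul_nonneg (by positivity) (hζ0 _)

lemma support_scaledMollifier_subset (hζ : support ζ ⊆ Icc (-1) 1) (hε : 0 < ε) :
    support (scaledMollifier ζ ε) ⊆ Icc (-ε) ε := by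
  intro t ht
  have ⟨hlo, hhi⟩ := hζ (right_ne_zero_of_mul ht)
  rw [le_div_iff₀ hε] at hlo
  rw [div_le_iff₀ hε] at hhi
  constructor <;> linarith

lemma integral_scaledMollifier (ζ : ℝ → ℝ) (hε : 0 < ε) :
    ∫ t, scaledMollifier ζ ε t = ∫ t, ζ t := by
  unfold scaledMollifier
  rw [integral_const_mul, Measure.integral_comp_div, abs_of_pos hε, smul_eq_mul, ← mul_assoc,
    one_div_mul_cancel hε.ne', one_mul]

end Mollifier

section MollifiedYosida

variable {ψ₁ ψ₂ α θ : ℝ} {ζ : ℝ → ℝ}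

lemma monotone_mollifiedYosida (hα : 0 ≤ α) (hθ : 0 < θ) (hζ : Continuous ζ)
    (hζsupp : support ζ ⊆ Icc (-1) 1) (hζ0 : ∀ t, 0 ≤ ζ t) :
    Monotone (mollifiedYosida ψ₁ ψ₂ α θ ζ) :=
  monotone_integral_comp_sub_mul (monotone_yosida ψ₁ ψ₂ hα) (continuous_yosida ψ₁ ψ₂ α)
    (continuous_scaledMollifier hζ θ)
    (.of_support_subset_isCompact isCompact_Icc (support_scaledMollifier_subset hζsupp hθ))
    (scaledMollifier_nonneg hζ0 hθ.le)

lemma yosida_sub_le_mollifiedYosida (hα : 0 ≤ α) (hθ : 0 < θ) (hζ : Continuous ζ)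
    (hζsupp : support ζ ⊆ Icc (-1) 1) (hζint : ∫ t, ζ t = 1) (hζ0 : ∀ t, 0 ≤ ζ t) (s : ℝ) :
    yosida ψ₁ ψ₂ α (s - θ) ≤ mollifiedYosida ψ₁ ψ₂ α θ ζ s :=
  le_integral_comp_sub_mul (monotone_yosida ψ₁ ψ₂ hα) (continuous_yosida ψ₁ ψ₂ α)
    (continuous_scaledMollifier hζ θ) (scaledMollifier_nonneg hζ0 hθ.le)
    (support_scaledMollifier_subset hζsupp hθ) ((integral_scaledMollifier ζ hθ).trans hζint) s

lemma mollifiedYosida_le_yosida_add (hα : 0 ≤ α) (hθ : 0 < θ) (hζ : Continuous ζ)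
    (hζsupp : support ζ ⊆ Icc (-1) 1) (hζint : ∫ t, ζ t = 1) (hζ0 : ∀ t, 0 ≤ ζ t) (s : ℝ) :
    mollifiedYosida ψ₁ ψ₂ α θ ζ s ≤ yosida ψ₁ ψ₂ α (s + θ) :=
  integral_comp_sub_mul_le (monotone_yosida ψ₁ ψ₂ hα) (continuous_yosida ψ₁ ψ₂ α)
    (continuous_scaledMollifier hζ θ) (scaledMollifier_nonneg hζ0 hθ.le)
    (support_scaledMollifier_subset hζsupp hθ) ((integral_scaledMollifier ζ hθ).trans hζint) s

end MollifiedYosida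

theorem regPotential_quadratic_growth_general
    (ψ₁ ψ₂ θ : ℝ) (hθ : 0 < θ)
    (hθmin : θ ≤ min (-ψ₁) ψ₂)
    (ζ : ℝ → ℝ) (hζC : ContDiff ℝ 1 ζ)
    (hζsupp : Function.support ζ ⊆ Set.Icc (-1) 1)
    (hζint : ∫ t, ζ t = 1) (hζ0 : ∀ t, 0 ≤ ζ t) :
    ∀ α, 0 < α →
      (∀ s, s ≤ ψ₁ - θ → (ψ₁ - θ - s) ^ 2 / (2 * α) ≤ regPotential ψ₁ ψ₂ α θ ζ s) ∧
      (∀ s, ψ₂ + θ ≤ s → (s - ψ₂ - θ) ^ 2 / (2 * α) ≤ regPotential ψ₁ ψ₂ α θ ζ s) := by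
  intro α hα
  have hθ₁ : θ ≤ -ψ₁ := hθmin.trans (min_le_left _ _)
  have hθ₂ : θ ≤ ψ₂ := hθmin.trans (min_le_right _ _)
  have hψ : ψ₁ ≤ ψ₂ := by linarith
  have hmono := monotone_mollifiedYosida (ψ₁ := ψ₁) (ψ₂ := ψ₂) hα.le hθ hζC.continuous hζsupp hζ0
  have lower := yosida_sub_le_mollifiedYosida (ψ₁ := ψ₁) (ψ₂ := ψ₂) hα.le hθ hζC.continuous
    hζsupp hζint hζ0
  have upper := mollifiedYosida_le_yosida_add (ψ₁ := ψ₁) (ψ₂ := ψ₂) hα.le hθ hζC.continuous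
    hζsupp hζint hζ0
  refine ⟨fun s hs => ?_, fun s hs => ?_⟩
  · refine sq_div_le_intervalIntegral_of_monotone_of_nonpos hmono ?_ (by linarith) hs fun t ht => ?_
    · exact (upper 0).trans_eq (yosida_eq_zero ⟨by linarith, by linarith⟩)
    · refine (upper t).trans_eq ?_
      rw [yosida_of_le hψ (by linarith [ht.2])]
      ring
  · rw [sub_sub]
    refine sq_div_le_intervalIntegral_of_monotone_of_nonneg hmono ?_ (by linarith) hs fun t ht => ?_
    · exact (yosida_eq_zero ⟨by linarith, by linarith⟩).symm.trans_le (lower 0)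
    · refine Eq.trans_le ?_ (lower t)
      rw [yosida_of_ge hψ (by linarith [ht.1])]
      ring

/-- Quadratic growth of the regularized potential outside the shifted interval
(the coercivity property making the regularization of Definition 7.1 satisfy
condition 2 of Theorem 3.8): if `θ ≤ min(−ψ₁, ψ₂)`, then for every `α > 0`,
`ψ₀ₐ(s) ≥ (ψ₁ − θ − s)²/(2α)` for `s ≤ ψ₁ − θ` and
`ψ₀ₐ(s) ≥ (s − ψ₂ − θ)²/(2α)` for `s ≥ ψ₂ + θ`. -/
theorem regPotential_quadratic_growth
    (ψ₁ ψ₂ θ : ℝ) (hψ₁ : ψ₁ < 0) (hψ₂ : 0 < ψ₂) (hθ : 0 < θ)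
    (hθmin : θ ≤ min (-ψ₁) ψ₂)
    (ζ : ℝ → ℝ) (hζC : ContDiff ℝ 1 ζ)
    (hζsupp : Function.support ζ ⊆ Set.Icc (-1) 1)
    (hζint : ∫ t, ζ t = 1) (hζ0 : ∀ t, 0 ≤ ζ t) (hζ1 : ∀ t, ζ t ≤ 1) :
    ∀ α, 0 < α →
      (∀ s, s ≤ ψ₁ - θ → (ψ₁ - θ - s) ^ 2 / (2 * α) ≤ regPotential ψ₁ ψ₂ α θ ζ s) ∧
      (∀ s, ψ₂ + θ ≤ s → (s - ψ₂ - θ) ^ 2 / (2 * α) ≤ regPotential ψ₁ ψ₂ α θ ζ s) :=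
  regPotential_quadratic_growth_general ψ₁ ψ₂ θ hθ hθmin ζ hζC hζsupp hζint hζ0
end
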